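/- arXiv:1603.00809 — 3 statements merged into one kernel-verified Lean document; each statement's English description precedes it below -/
import Mathlib

section
/- (Affine-covariant Newton–Kantorovich) Let F : D → Y be continuously Fréchet differentiable on an open convex subset D of a Banach space U. Let u₀ ∈ D and assume: F'(u₀) is invertible with α = ‖F'(u₀)⁻¹ F(u₀)‖; ‖F'(u₀)⁻¹(F'(u) − F'(v))‖ ≤ ω₀‖u − v‖ for all u,v ∈ D; h₀ = α·ω₀ ≤ 1/2; and the closed ball of radius ρ₀ = (1 − √(1 − 2h₀))/ω₀ about u₀ is contained in D. Then the Newton iteration u_{k+1} = u_k − F'(u_k)⁻¹F(u_k) is well-defined, stays in this ball, and converges to a root u* of F in the ball; moreover u* is the unique root of F in D ∩ B(u₀, ρ⁺) where ρ⁺ = (1 + √(1 − 2h₀))/ω₀. -/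
/-!
Precomposing with `A₀ = F'(u₀)⁻¹` turns `F` into `G = A₀ ∘ F`, with `G'(u₀) = 1` and an
`ω₀`-Lipschitz derivative, without changing the Newton iterates. These are compared with Newton's
method `tₖ` for the scalar quadratic `φ(t) = ω₀/2 t² + σ t`, `σ = √(1 - 2αω₀)`, started at
`ρ₀ = (1 - σ)/ω₀`, which decreases to the root `0`: inductively `‖uₖ - u₀‖ ≤ ρ₀ - tₖ` and
`‖G uₖ‖ ≤ φ(tₖ)`. A Neumann series gives `‖G'(uₖ)⁻¹‖ ≤ 1/φ'(tₖ)`, and the Lipschitz bound gives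
`‖G uₖ₊₁‖ ≤ ω₀/2 ‖uₖ₊₁ - uₖ‖²`, which holds with equality for `φ`. For uniqueness, a root `v`
with `‖v - u₀‖ = q ρ⁺`, `q < 1`, satisfies `‖v - uₖ‖ ≤ q^(2^k) (tₖ + 2σ/ω₀)`, where
`tₖ + 2σ/ω₀` is the distance from `tₖ` to the other root of `φ`.
-/

open Filter Topology Metric

/-- A sequence `u` is a Newton sequence for `F` with derivative `F'`:
at each step the derivative is invertible and
`u (k+1) = u k - F'(u k)⁻¹ (F (u k))`. -/
def IsNewtonSeq {U Y : Type*} [NormedAddCommGroup U] [NormedSpace ℝ U]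
    [NormedAddCommGroup Y] [NormedSpace ℝ Y]
    (F : U → Y) (F' : U → (U →L[ℝ] Y)) (u : ℕ → U) : Prop :=
  ∀ k, ∃ A : Y →L[ℝ] U, (∀ y, F' (u k) (A y) = y) ∧ (∀ x, A (F' (u k) x) = x) ∧
    u (k + 1) = u k - A (F (u k))

open Set
open scoped Ring

theorem Convex.norm_image_sub_sub_fderiv_le {E F : Type*} [NormedAddCommGroup E]
    [NormedSpace ℝ E] [NormedAddCommGroup F] [NormedSpace ℝ F] {s : Set E} (hs : Convex ℝ s)
    {f : E → F} {f' : E → E →L[ℝ] F} (hf : ∀ x ∈ s, HasFDerivAt f (f' x) x) {L : ℝ}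
    (hL : ∀ x ∈ s, ∀ y ∈ s, ‖f' x - f' y‖ ≤ L * ‖x - y‖) {x y : E} (hx : x ∈ s) (hy : y ∈ s) :
    ‖f y - f x - f' x (y - x)‖ ≤ L / 2 * ‖y - x‖ ^ 2 := by
  set γ : ℝ → E := fun t => x + t • (y - x)
  have hγ : ∀ t ∈ Icc (0 : ℝ) 1, γ t ∈ s := fun t ht => hs.add_smul_sub_mem hx hy ht
  have hderiv : ∀ t ∈ Icc (0 : ℝ) 1, HasDerivAt (fun t : ℝ => f (γ t) - f x - t • f' x (y - x))
      ((f' (γ t) - f' x) (y - x)) t := by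
    intro t ht
    have hγ' : HasDerivAt γ (y - x) t :=
      (((hasDerivAt_id' t).smul_const (y - x)).const_add x).congr_deriv (one_smul ℝ _)
    convert (((hf _ (hγ t ht)).comp_hasDerivAt t hγ').sub_const (f x)).sub
      ((hasDerivAt_id' t).smul_const (f' x (y - x))) using 1
    · rfl
    · simp only [sub_apply, one_smul]
  have hbound : ∀ t ∈ Ico (0 : ℝ) 1, ‖(f' (γ t) - f' x) (y - x)‖ ≤ L * ‖y - x‖ ^ 2 * t := by
    intro t ht
    calc ‖(f' (γ t) - f' x) (y - x)‖ ≤ ‖f' (γ t) - f' x‖ * ‖y - x‖ := (f' (γ t) - f' x).le_opNorm _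
      _ ≤ L * ‖γ t - x‖ * ‖y - x‖ := by gcongr; exact hL _ (hγ t (Ico_subset_Icc_self ht)) x hx
      _ = L * ‖y - x‖ ^ 2 * t := by
        simp only [γ, add_sub_cancel_left, norm_smul, Real.norm_of_nonneg ht.1]
        ring
  have hmajorant : ∀ t : ℝ, HasDerivAt (fun t => L / 2 * ‖y - x‖ ^ 2 * t ^ 2)
      (L * ‖y - x‖ ^ 2 * t) t := fun t =>
    ((hasDerivAt_pow 2 t).const_mul (L / 2 * ‖y - x‖ ^ 2)).congr_deriv (by ring)
  simpa [γ] using image_norm_le_of_norm_deriv_right_le_deriv_boundary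
    (fun t ht => (hderiv t ht).continuousAt.continuousWithinAt)
    (fun t ht => (hderiv t (Ico_subset_Icc_self ht)).hasDerivWithinAt) (by simp [γ]) hmajorant
    hbound (right_mem_Icc.2 zero_le_one)

theorem norm_inverse_le_of_norm_one_sub_le {R : Type*} [NormedRing R] [HasSummableGeomSeries R]
    (h1 : ‖(1 : R)‖ ≤ 1) {x : R} {c : ℝ} (hc : 0 < c) (hx : ‖1 - x‖ ≤ 1 - c) :
    ‖x⁻¹ʳ‖ ≤ c⁻¹ := by
  have hlt : ‖1 - x‖ < 1 := by linarith
  calc ‖x⁻¹ʳ‖ = ‖∑' n : ℕ, (1 - x) ^ n‖ := by rw [geom_series_eq_inverse _ hlt, sub_sub_cancel]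
    _ ≤ ‖(1 : R)‖ - 1 + (1 - ‖1 - x‖)⁻¹ := tsum_geometric_le_of_norm_lt_one _ hlt
    _ ≤ c⁻¹ := by
      have : (1 - ‖1 - x‖)⁻¹ ≤ c⁻¹ := inv_anti₀ hc (by linarith)
      linarith

section Majorant

variable {σ ω : ℝ}

noncomputable def kantorovichMajorant (σ ω t : ℝ) : ℝ := ω / 2 * t ^ 2 + σ * t

noncomputable def kantorovichSeq (σ ω : ℝ) : ℕ → ℝ
  | 0 => (1 - σ) / ω
  | k + 1 => kantorovichSeq σ ω k -
      kantorovichMajorant σ ω (kantorovichSeq σ ω k) / (σ + ω * kantorovichSeq σ ω k)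

theorem kantorovichSeq_zero : kantorovichSeq σ ω 0 = (1 - σ) / ω := rfl

theorem kantorovichSeq_sub_succ (k : ℕ) :
    kantorovichSeq σ ω k - kantorovichSeq σ ω (k + 1) =
      kantorovichMajorant σ ω (kantorovichSeq σ ω k) / (σ + ω * kantorovichSeq σ ω k) := by
  rw [kantorovichSeq, sub_sub_cancel]

theorem kantorovichSeq_succ {k : ℕ} (hk : σ + ω * kantorovichSeq σ ω k ≠ 0) :
    kantorovichSeq σ ω (k + 1) =
      ω * kantorovichSeq σ ω k ^ 2 / (2 * (σ + ω * kantorovichSeq σ ω k)) := by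
  rw [kantorovichSeq, kantorovichMajorant]
  generalize kantorovichSeq σ ω k = t at hk ⊢
  have hk₂ : 2 * (σ + ω * t) ≠ 0 := mul_ne_zero two_ne_zero hk
  rw [sub_eq_iff_eq_add, div_add_div _ _ hk₂ hk, eq_div_iff (mul_ne_zero hk₂ hk)]
  ring

theorem kantorovichMajorant_kantorovichSeq_zero (hω : ω ≠ 0) :
    kantorovichMajorant σ ω (kantorovichSeq σ ω 0) = (1 - σ ^ 2) / (2 * ω) := by
  rw [kantorovichSeq_zero, kantorovichMajorant]
  field_simp
  ring

theorem kantorovichMajorant_kantorovichSeq_succ {k : ℕ}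
    (hk : σ + ω * kantorovichSeq σ ω k ≠ 0) :
    kantorovichMajorant σ ω (kantorovichSeq σ ω (k + 1)) =
      ω / 2 * (kantorovichSeq σ ω k - kantorovichSeq σ ω (k + 1)) ^ 2 := by
  rw [kantorovichSeq_succ hk, kantorovichMajorant]
  field_simp
  ring

theorem kantorovichSeq_succ_add (hω : ω ≠ 0) {k : ℕ} (hk : σ + ω * kantorovichSeq σ ω k ≠ 0) :
    kantorovichSeq σ ω (k + 1) + 2 * σ / ω =
      ω / 2 * (kantorovichSeq σ ω k + 2 * σ / ω) ^ 2 / (σ + ω * kantorovichSeq σ ω k) := by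
  rw [kantorovichSeq_succ hk]
  field_simp
  ring

theorem add_mul_kantorovichSeq_pos (σ : ℝ) (hω : ω ≠ 0) (k : ℕ) :
    0 < σ + ω * kantorovichSeq σ ω k := by
  induction k with
  | zero => rw [kantorovichSeq_zero, mul_div_cancel₀ _ hω]; norm_num
  | succ k ih =>
    rw [kantorovichSeq_succ ih.ne']
    generalize kantorovichSeq σ ω k = t at ih ⊢
    have hsplit : σ + ω * (ω * t ^ 2 / (2 * (σ + ω * t))) =
        (σ + ω * t) / 2 + σ ^ 2 / (2 * (σ + ω * t)) := by
      field_simp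
      ring
    rw [hsplit]
    positivity

theorem kantorovichSeq_nonneg (hσ₁ : σ ≤ 1) (hω : 0 < ω) : ∀ k, 0 ≤ kantorovichSeq σ ω k
  | 0 => div_nonneg (by linarith) hω.le
  | k + 1 => by
    have hk := add_mul_kantorovichSeq_pos σ hω.ne' k
    rw [kantorovichSeq_succ hk.ne']
    positivity

theorem kantorovichSeq_succ_le_half (hσ : 0 ≤ σ) (hσ₁ : σ ≤ 1) (hω : 0 < ω) (k : ℕ) :
    kantorovichSeq σ ω (k + 1) ≤ kantorovichSeq σ ω k / 2 := by
  have hk := kantorovichSeq_nonneg hσ₁ hω k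
  have hk' := add_mul_kantorovichSeq_pos σ hω.ne' k
  rw [kantorovichSeq_succ hk'.ne', div_le_div_iff₀ (mul_pos two_pos hk') two_pos]
  nlinarith [mul_nonneg hσ hk]

theorem kantorovichSeq_le_geometric (hσ : 0 ≤ σ) (hσ₁ : σ ≤ 1) (hω : 0 < ω) (k : ℕ) :
    kantorovichSeq σ ω k ≤ kantorovichSeq σ ω 0 * (1 / 2) ^ k := by
  induction k with
  | zero => simp
  | succ k ih =>
    calc kantorovichSeq σ ω (k + 1) ≤ kantorovichSeq σ ω k / 2 :=
          kantorovichSeq_succ_le_half hσ hσ₁ hω k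
      _ ≤ kantorovichSeq σ ω 0 * (1 / 2) ^ (k + 1) := by rw [pow_succ]; linarith

theorem kantorovichSeq_antitone (hσ : 0 ≤ σ) (hσ₁ : σ ≤ 1) (hω : 0 < ω) :
    Antitone (kantorovichSeq σ ω) :=
  antitone_nat_of_succ_le fun k => (kantorovichSeq_succ_le_half hσ hσ₁ hω k).trans
    (by linarith [kantorovichSeq_nonneg hσ₁ hω k])

theorem tendsto_kantorovichSeq_atTop (hσ : 0 ≤ σ) (hσ₁ : σ ≤ 1) (hω : 0 < ω) :
    Tendsto (kantorovichSeq σ ω) atTop (𝓝 0) := by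
  refine squeeze_zero (fun k => kantorovichSeq_nonneg hσ₁ hω k)
    (kantorovichSeq_le_geometric hσ hσ₁ hω) ?_
  simpa using (tendsto_pow_atTop_nhds_zero_of_lt_one (by norm_num : (0 : ℝ) ≤ 1 / 2)
    (by norm_num)).const_mul (kantorovichSeq σ ω 0)

end Majorant

section NewtonStep

variable {U : Type*} [NormedAddCommGroup U] [NormedSpace ℝ U]
  {G : U → U} {G' : U → U →L[ℝ] U} {D : Set U} {ω : ℝ} {x v : U}

-- `Ring.inverse` is `0` off the units, so this is only a Newton step where `G' x` is invertible.
noncomputable def newtonStep (G : U → U) (G' : U → U →L[ℝ] U) (x : U) : U := x - (G' x)⁻¹ʳ (G x)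

noncomputable def newtonSeq (G : U → U) (G' : U → U →L[ℝ] U) (x₀ : U) (k : ℕ) : U :=
  (newtonStep G G')^[k] x₀

theorem newtonSeq_zero (x₀ : U) : newtonSeq G G' x₀ 0 = x₀ := rfl

theorem newtonSeq_succ (x₀ : U) (k : ℕ) :
    newtonSeq G G' x₀ (k + 1) = newtonStep G G' (newtonSeq G G' x₀ k) :=
  Function.iterate_succ_apply' _ _ _

theorem fderiv_apply_newtonStep_sub (hx : IsUnit (G' x)) :
    G' x (newtonStep G G' x - x) = -G x := by
  rw [newtonStep, sub_sub_cancel_left, map_neg, ← mul_apply_eq_comp,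
    Ring.mul_inverse_cancel _ hx, one_apply_eq_self]

theorem norm_image_newtonStep_le (hD : Convex ℝ D) (hG : ∀ y ∈ D, HasFDerivAt G (G' y) y)
    (hG' : ∀ y ∈ D, ∀ z ∈ D, ‖G' y - G' z‖ ≤ ω * ‖y - z‖) (hx : x ∈ D)
    (hx' : newtonStep G G' x ∈ D) (hunit : IsUnit (G' x)) :
    ‖G (newtonStep G G' x)‖ ≤ ω / 2 * ‖newtonStep G G' x - x‖ ^ 2 := by
  simpa [fderiv_apply_newtonStep_sub hunit] using hD.norm_image_sub_sub_fderiv_le hG hG' hx hx'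

theorem norm_sub_newtonStep_le (hD : Convex ℝ D) (hG : ∀ y ∈ D, HasFDerivAt G (G' y) y)
    (hG' : ∀ y ∈ D, ∀ z ∈ D, ‖G' y - G' z‖ ≤ ω * ‖y - z‖) (hx : x ∈ D) (hv : v ∈ D)
    (hGv : G v = 0) (hunit : IsUnit (G' x)) :
    ‖v - newtonStep G G' x‖ ≤ ‖(G' x)⁻¹ʳ‖ * (ω / 2 * ‖v - x‖ ^ 2) := by
  have hrepr : v - newtonStep G G' x = -(G' x)⁻¹ʳ (G v - G x - G' x (v - x)) := by
    rw [hGv, zero_sub, ← neg_add', map_neg, neg_neg, map_add, ← mul_apply_eq_comp,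
      Ring.inverse_mul_cancel _ hunit, one_apply_eq_self, newtonStep]
    abel
  rw [hrepr, norm_neg]
  exact ((G' x)⁻¹ʳ.le_opNorm _).trans
    (by gcongr; exact hD.norm_image_sub_sub_fderiv_le hG hG' hx hv)

end NewtonStep

section Kantorovich

variable {U : Type*} [NormedAddCommGroup U] [NormedSpace ℝ U]

-- `σ` stands for `√(1 - 2αω)`, so that the bound on `‖G u₀‖` is `α`.
structure KantorovichCondition (G : U → U) (G' : U → U →L[ℝ] U) (D : Set U) (u₀ : U)
    (σ ω : ℝ) : Prop where
  convex : Convex ℝ D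
  hasFDerivAt : ∀ x ∈ D, HasFDerivAt G (G' x) x
  lipschitz : ∀ x ∈ D, ∀ y ∈ D, ‖G' x - G' y‖ ≤ ω * ‖x - y‖
  fderiv_base : G' u₀ = 1
  sigma_nonneg : 0 ≤ σ
  sigma_le_one : σ ≤ 1
  omega_pos : 0 < ω
  norm_image_base : ‖G u₀‖ ≤ (1 - σ ^ 2) / (2 * ω)
  closedBall_subset : closedBall u₀ ((1 - σ) / ω) ⊆ D

namespace KantorovichCondition

variable {G : U → U} {G' : U → U →L[ℝ] U} {D : Set U} {u₀ x v : U} {σ ω : ℝ} {k : ℕ}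

theorem mem_of_norm_sub_le (h : KantorovichCondition G G' D u₀ σ ω)
    (hx : ‖x - u₀‖ ≤ kantorovichSeq σ ω 0 - kantorovichSeq σ ω k) : x ∈ D := by
  refine h.closedBall_subset ?_
  rw [mem_closedBall, dist_eq_norm, ← kantorovichSeq_zero]
  linarith [kantorovichSeq_nonneg h.sigma_le_one h.omega_pos k]

variable [CompleteSpace U]

theorem isUnit_and_norm_inverse_le (h : KantorovichCondition G G' D u₀ σ ω)
    (hx : ‖x - u₀‖ ≤ kantorovichSeq σ ω 0 - kantorovichSeq σ ω k) :
    IsUnit (G' x) ∧ ‖(G' x)⁻¹ʳ‖ ≤ (σ + ω * kantorovichSeq σ ω k)⁻¹ := by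
  have hk := add_mul_kantorovichSeq_pos σ h.omega_pos.ne' k
  have hone : ‖1 - G' x‖ ≤ 1 - (σ + ω * kantorovichSeq σ ω k) := by
    calc ‖1 - G' x‖ = ‖G' u₀ - G' x‖ := by rw [h.fderiv_base]
      _ ≤ ω * ‖u₀ - x‖ :=
        h.lipschitz _ (h.mem_of_norm_sub_le (k := 0) (by simp)) _ (h.mem_of_norm_sub_le hx)
      _ ≤ ω * (kantorovichSeq σ ω 0 - kantorovichSeq σ ω k) := by
        rw [norm_sub_rev]; exact mul_le_mul_of_nonneg_left hx h.omega_pos.le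
      _ = 1 - (σ + ω * kantorovichSeq σ ω k) := by
        rw [mul_sub, kantorovichSeq_zero, mul_div_cancel₀ _ h.omega_pos.ne']; ring
  refine ⟨?_, norm_inverse_le_of_norm_one_sub_le ContinuousLinearMap.norm_id_le hk hone⟩
  simpa using isUnit_one_sub_of_norm_lt_one (hone.trans_lt (by linarith))

theorem newtonStep_majorized (h : KantorovichCondition G G' D u₀ σ ω)
    (hx : ‖x - u₀‖ ≤ kantorovichSeq σ ω 0 - kantorovichSeq σ ω k)
    (hGx : ‖G x‖ ≤ kantorovichMajorant σ ω (kantorovichSeq σ ω k)) :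
    ‖newtonStep G G' x - x‖ ≤ kantorovichSeq σ ω k - kantorovichSeq σ ω (k + 1) ∧
      ‖G (newtonStep G G' x)‖ ≤ kantorovichMajorant σ ω (kantorovichSeq σ ω (k + 1)) := by
  obtain ⟨hunit, hinv⟩ := h.isUnit_and_norm_inverse_le hx
  have hk := add_mul_kantorovichSeq_pos σ h.omega_pos.ne' k
  have hstep : ‖newtonStep G G' x - x‖ ≤ kantorovichSeq σ ω k - kantorovichSeq σ ω (k + 1) :=
    calc ‖newtonStep G G' x - x‖ = ‖(G' x)⁻¹ʳ (G x)‖ := by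
          rw [newtonStep, sub_sub_cancel_left, norm_neg]
      _ ≤ ‖(G' x)⁻¹ʳ‖ * ‖G x‖ := (G' x)⁻¹ʳ.le_opNorm _
      _ ≤ (σ + ω * kantorovichSeq σ ω k)⁻¹ * kantorovichMajorant σ ω (kantorovichSeq σ ω k) := by
          gcongr
      _ = kantorovichSeq σ ω k - kantorovichSeq σ ω (k + 1) := by
          rw [kantorovichSeq_sub_succ, div_eq_inv_mul]
  have hx' : newtonStep G G' x ∈ D := h.mem_of_norm_sub_le (k := k + 1) <| by
    linarith [norm_sub_le_norm_sub_add_norm_sub (newtonStep G G' x) x u₀]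
  refine ⟨hstep, ?_⟩
  calc ‖G (newtonStep G G' x)‖ ≤ ω / 2 * ‖newtonStep G G' x - x‖ ^ 2 :=
        norm_image_newtonStep_le h.convex h.hasFDerivAt h.lipschitz (h.mem_of_norm_sub_le hx) hx'
          hunit
    _ ≤ ω / 2 * (kantorovichSeq σ ω k - kantorovichSeq σ ω (k + 1)) ^ 2 := by
        have := h.omega_pos
        gcongr
    _ = kantorovichMajorant σ ω (kantorovichSeq σ ω (k + 1)) :=
        (kantorovichMajorant_kantorovichSeq_succ hk.ne').symm

theorem newtonSeq_majorized (h : KantorovichCondition G G' D u₀ σ ω) (k : ℕ) :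
    ‖newtonSeq G G' u₀ k - u₀‖ ≤ kantorovichSeq σ ω 0 - kantorovichSeq σ ω k ∧
      ‖G (newtonSeq G G' u₀ k)‖ ≤ kantorovichMajorant σ ω (kantorovichSeq σ ω k) := by
  induction k with
  | zero =>
    rw [kantorovichMajorant_kantorovichSeq_zero h.omega_pos.ne']
    exact ⟨by simp [newtonSeq_zero], h.norm_image_base⟩
  | succ k ih =>
    obtain ⟨hstep, hG⟩ := h.newtonStep_majorized ih.1 ih.2
    rw [newtonSeq_succ]
    refine ⟨?_, hG⟩
    linarith [norm_sub_le_norm_sub_add_norm_sub (newtonStep G G' (newtonSeq G G' u₀ k))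
      (newtonSeq G G' u₀ k) u₀, ih.1]

theorem norm_newtonSeq_succ_sub_le (h : KantorovichCondition G G' D u₀ σ ω) (k : ℕ) :
    ‖newtonSeq G G' u₀ (k + 1) - newtonSeq G G' u₀ k‖ ≤
      kantorovichSeq σ ω k - kantorovichSeq σ ω (k + 1) := by
  rw [newtonSeq_succ]
  exact (h.newtonStep_majorized (h.newtonSeq_majorized k).1 (h.newtonSeq_majorized k).2).1

theorem isUnit_fderiv_newtonSeq (h : KantorovichCondition G G' D u₀ σ ω) (k : ℕ) :
    IsUnit (G' (newtonSeq G G' u₀ k)) :=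
  (h.isUnit_and_norm_inverse_le (h.newtonSeq_majorized k).1).1

theorem newtonSeq_mem_closedBall (h : KantorovichCondition G G' D u₀ σ ω) (k : ℕ) :
    newtonSeq G G' u₀ k ∈ closedBall u₀ ((1 - σ) / ω) := by
  rw [mem_closedBall, dist_eq_norm, ← kantorovichSeq_zero]
  linarith [(h.newtonSeq_majorized k).1, kantorovichSeq_nonneg h.sigma_le_one h.omega_pos k]

theorem cauchySeq_newtonSeq (h : KantorovichCondition G G' D u₀ σ ω) :
    CauchySeq (newtonSeq G G' u₀) := by
  refine cauchySeq_of_le_geometric (1 / 2) (kantorovichSeq σ ω 0) (by norm_num) fun k => ?_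
  rw [dist_comm, dist_eq_norm]
  linarith [h.norm_newtonSeq_succ_sub_le k,
    kantorovichSeq_nonneg h.sigma_le_one h.omega_pos (k + 1),
    kantorovichSeq_le_geometric h.sigma_nonneg h.sigma_le_one h.omega_pos k]

theorem tendsto_image_newtonSeq (h : KantorovichCondition G G' D u₀ σ ω) :
    Tendsto (fun k => G (newtonSeq G G' u₀ k)) atTop (𝓝 0) := by
  have hφ : Tendsto (fun k => kantorovichMajorant σ ω (kantorovichSeq σ ω k)) atTop (𝓝 0) := by
    have hcont : Continuous (kantorovichMajorant σ ω) := by unfold kantorovichMajorant; fun_prop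
    simpa [kantorovichMajorant, Function.comp_def] using (hcont.tendsto 0).comp
      (tendsto_kantorovichSeq_atTop h.sigma_nonneg h.sigma_le_one h.omega_pos)
  exact tendsto_zero_iff_norm_tendsto_zero.2 <|
    squeeze_zero (fun _ => norm_nonneg _) (fun k => (h.newtonSeq_majorized k).2) hφ

theorem norm_sub_newtonSeq_le_of_root (h : KantorovichCondition G G' D u₀ σ ω) (hv : v ∈ D)
    (hGv : G v = 0) (k : ℕ) :
    ‖v - newtonSeq G G' u₀ k‖ ≤
      (ω * ‖v - u₀‖ / (1 + σ)) ^ 2 ^ k * (kantorovichSeq σ ω k + 2 * σ / ω) := by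
  have hω := h.omega_pos
  have hσ := h.sigma_nonneg
  induction k with
  | zero =>
    rw [pow_zero, pow_one, newtonSeq_zero, kantorovichSeq_zero]
    exact le_of_eq (by field_simp; ring)
  | succ k ih =>
    obtain ⟨hunit, hinv⟩ := h.isUnit_and_norm_inverse_le (h.newtonSeq_majorized k).1
    have hk := add_mul_kantorovichSeq_pos σ hω.ne' k
    set q := ω * ‖v - u₀‖ / (1 + σ)
    calc ‖v - newtonSeq G G' u₀ (k + 1)‖
        ≤ ‖(G' (newtonSeq G G' u₀ k))⁻¹ʳ‖ * (ω / 2 * ‖v - newtonSeq G G' u₀ k‖ ^ 2) := by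
          rw [newtonSeq_succ]
          exact norm_sub_newtonStep_le h.convex h.hasFDerivAt h.lipschitz
            (h.mem_of_norm_sub_le (h.newtonSeq_majorized k).1) hv hGv hunit
      _ ≤ (σ + ω * kantorovichSeq σ ω k)⁻¹ *
          (ω / 2 * (q ^ 2 ^ k * (kantorovichSeq σ ω k + 2 * σ / ω)) ^ 2) := by
          gcongr
      _ = q ^ 2 ^ (k + 1) * (kantorovichSeq σ ω (k + 1) + 2 * σ / ω) := by
          rw [kantorovichSeq_succ_add hω.ne' hk.ne', pow_succ 2 k, pow_mul]
          field_simp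

theorem tendsto_newtonSeq_of_root (h : KantorovichCondition G G' D u₀ σ ω) (hv : v ∈ D)
    (hvu₀ : ‖v - u₀‖ < (1 + σ) / ω) (hGv : G v = 0) :
    Tendsto (newtonSeq G G' u₀) atTop (𝓝 v) := by
  have hω := h.omega_pos
  have hσ := h.sigma_nonneg
  set q := ω * ‖v - u₀‖ / (1 + σ)
  have hq : q < 1 := by
    rw [div_lt_one (by linarith), ← lt_div_iff₀' hω]
    exact hvu₀
  have hq_pow : Tendsto (fun k => q ^ 2 ^ k) atTop (𝓝 0) :=
    (tendsto_pow_atTop_nhds_zero_of_lt_one (by positivity) hq).comp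
      (tendsto_pow_atTop_atTop_of_one_lt one_lt_two)
  rw [tendsto_iff_norm_sub_tendsto_zero]
  refine squeeze_zero (fun _ => norm_nonneg _) (fun k => ?_)
    (by simpa using hq_pow.mul_const (kantorovichSeq σ ω 0 + 2 * σ / ω))
  rw [norm_sub_rev]
  refine (h.norm_sub_newtonSeq_le_of_root hv hGv k).trans ?_
  gcongr
  exact kantorovichSeq_antitone hσ h.sigma_le_one hω (Nat.zero_le k)

theorem exists_root_tendsto_newtonSeq (h : KantorovichCondition G G' D u₀ σ ω) :
    ∃ uStar ∈ closedBall u₀ ((1 - σ) / ω), G uStar = 0 ∧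
      Tendsto (newtonSeq G G' u₀) atTop (𝓝 uStar) ∧
      ∀ v ∈ D ∩ ball u₀ ((1 + σ) / ω), G v = 0 → v = uStar := by
  obtain ⟨uStar, hlim⟩ := cauchySeq_tendsto_of_complete h.cauchySeq_newtonSeq
  have hmem : uStar ∈ closedBall u₀ ((1 - σ) / ω) :=
    isClosed_closedBall.mem_of_tendsto hlim (Eventually.of_forall h.newtonSeq_mem_closedBall)
  have hroot : G uStar = 0 :=
    tendsto_nhds_unique
      ((h.hasFDerivAt _ (h.closedBall_subset hmem)).continuousAt.tendsto.comp hlim)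
      h.tendsto_image_newtonSeq
  refine ⟨uStar, hmem, hroot, hlim, fun v ⟨hvD, hvball⟩ hGv => ?_⟩
  rw [mem_ball, dist_eq_norm] at hvball
  exact tendsto_nhds_unique (h.tendsto_newtonSeq_of_root hvD hvball hGv) hlim

end KantorovichCondition

end Kantorovich

theorem isNewtonSeq_of_newtonStep_comp {U Y : Type*} [NormedAddCommGroup U] [NormedSpace ℝ U]
    [NormedAddCommGroup Y] [NormedSpace ℝ Y] {F : U → Y} {F' : U → U →L[ℝ] Y} {A : Y →L[ℝ] U}
    (hA : Function.Injective A) {u : ℕ → U} (hunit : ∀ k, IsUnit (A.comp (F' (u k))))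
    (hu : ∀ k, u (k + 1) = newtonStep (fun x => A (F x)) (fun x => A.comp (F' x)) (u k)) :
    IsNewtonSeq F F' u := by
  intro k
  set T := A.comp (F' (u k))
  refine ⟨T⁻¹ʳ.comp A, fun y => hA ?_, fun x => ?_, hu k⟩
  · change T (T⁻¹ʳ (A y)) = A y
    rw [← mul_apply_eq_comp, Ring.mul_inverse_cancel _ (hunit k), one_apply_eq_self]
  · change T⁻¹ʳ (T x) = x
    rw [← mul_apply_eq_comp, Ring.inverse_mul_cancel _ (hunit k), one_apply_eq_self]

theorem newton_kantorovich_general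
    {U Y : Type*} [NormedAddCommGroup U] [NormedSpace ℝ U] [CompleteSpace U]
    [NormedAddCommGroup Y] [NormedSpace ℝ Y]
    (D : Set U) (hDconv : Convex ℝ D)
    (F : U → Y) (F' : U → (U →L[ℝ] Y))
    (hdiff : ∀ u ∈ D, HasFDerivAt F (F' u) u)
    (u₀ : U)
    (A₀ : Y →L[ℝ] U) (hA₀l : ∀ y, F' u₀ (A₀ y) = y) (hA₀r : ∀ x, A₀ (F' u₀ x) = x)
    (α ω₀ : ℝ) (hω₀ : 0 < ω₀)
    (hα : ‖A₀ (F u₀)‖ = α)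
    (hLip : ∀ u ∈ D, ∀ v ∈ D, ‖A₀.comp (F' u - F' v)‖ ≤ ω₀ * ‖u - v‖)
    (h₀ : α * ω₀ ≤ 1 / 2)
    (hball : closedBall u₀ ((1 - Real.sqrt (1 - 2 * (α * ω₀))) / ω₀) ⊆ D) :
    ∃ u : ℕ → U, u 0 = u₀ ∧ IsNewtonSeq F F' u ∧
      (∀ k, u k ∈ closedBall u₀ ((1 - Real.sqrt (1 - 2 * (α * ω₀))) / ω₀)) ∧
      ∃ uStar ∈ closedBall u₀ ((1 - Real.sqrt (1 - 2 * (α * ω₀))) / ω₀),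
        F uStar = 0 ∧ Tendsto u atTop (𝓝 uStar) ∧
        ∀ v ∈ D ∩ ball u₀ ((1 + Real.sqrt (1 - 2 * (α * ω₀))) / ω₀),
          F v = 0 → v = uStar := by
  have hα₀ : 0 ≤ α := hα ▸ norm_nonneg _
  set σ := Real.sqrt (1 - 2 * (α * ω₀))
  have hσ : σ ^ 2 = 1 - 2 * (α * ω₀) := Real.sq_sqrt (by linarith)
  have hA₀ : Function.Injective A₀ := Function.LeftInverse.injective hA₀l
  have hK : KantorovichCondition (fun x => A₀ (F x)) (fun x => A₀.comp (F' x)) D u₀ σ ω₀ :=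
    { convex := hDconv
      hasFDerivAt := fun x hx => A₀.hasFDerivAt.comp x (hdiff x hx)
      lipschitz := fun x hx y hy => by
        simpa only [ContinuousLinearMap.comp_sub] using hLip x hx y hy
      fderiv_base := ContinuousLinearMap.ext hA₀r
      sigma_nonneg := Real.sqrt_nonneg _
      sigma_le_one := Real.sqrt_le_one.mpr (by linarith [mul_nonneg hα₀ hω₀.le])
      omega_pos := hω₀
      norm_image_base := by rw [hα, hσ]; exact le_of_eq (by field_simp; ring)
      closedBall_subset := hball }
  obtain ⟨uStar, hmem, hroot, hlim, huniq⟩ := hK.exists_root_tendsto_newtonSeq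
  refine ⟨_, newtonSeq_zero u₀,
    isNewtonSeq_of_newtonStep_comp hA₀ hK.isUnit_fderiv_newtonSeq (newtonSeq_succ u₀),
    hK.newtonSeq_mem_closedBall, uStar, hmem, (map_eq_zero_iff A₀ hA₀).1 hroot, hlim,
    fun v hv hFv => huniq v hv (by simp [hFv])⟩

/-- Affine-covariant Newton–Kantorovich theorem. -/
theorem newton_kantorovich
    {U Y : Type*} [NormedAddCommGroup U] [NormedSpace ℝ U] [CompleteSpace U]
    [NormedAddCommGroup Y] [NormedSpace ℝ Y] [CompleteSpace Y]
    (D : Set U) (hDopen : IsOpen D) (hDconv : Convex ℝ D)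
    (F : U → Y) (F' : U → (U →L[ℝ] Y))
    (hdiff : ∀ u ∈ D, HasFDerivAt F (F' u) u) (hcont : ContinuousOn F' D)
    (u₀ : U) (hu₀ : u₀ ∈ D)
    (A₀ : Y →L[ℝ] U) (hA₀l : ∀ y, F' u₀ (A₀ y) = y) (hA₀r : ∀ x, A₀ (F' u₀ x) = x)
    (α ω₀ : ℝ) (hω₀ : 0 < ω₀)
    (hα : ‖A₀ (F u₀)‖ = α)
    (hLip : ∀ u ∈ D, ∀ v ∈ D, ‖A₀.comp (F' u - F' v)‖ ≤ ω₀ * ‖u - v‖)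
    (h₀ : α * ω₀ ≤ 1 / 2)
    (hball : closedBall u₀ ((1 - Real.sqrt (1 - 2 * (α * ω₀))) / ω₀) ⊆ D) :
    ∃ u : ℕ → U, u 0 = u₀ ∧ IsNewtonSeq F F' u ∧
      (∀ k, u k ∈ closedBall u₀ ((1 - Real.sqrt (1 - 2 * (α * ω₀))) / ω₀)) ∧
      ∃ uStar ∈ closedBall u₀ ((1 - Real.sqrt (1 - 2 * (α * ω₀))) / ω₀),
        F uStar = 0 ∧ Tendsto u atTop (𝓝 uStar) ∧
        ∀ v ∈ D ∩ ball u₀ ((1 + Real.sqrt (1 - 2 * (α * ω₀))) / ω₀),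
          F v = 0 → v = uStar :=
  newton_kantorovich_general D hDconv F F' hdiff u₀ A₀ hA₀l hA₀r α ω₀ hω₀ hα hLip h₀ hball
end

section
/- (Affine-covariant Rall–Rheinboldt) Let F : D → Y be continuously Fréchet differentiable on an open convex D ⊆ U, and suppose u* ∈ D satisfies F(u*) = 0, F'(u*) is invertible, and ‖F'(u*)⁻¹(F'(u) − F'(v))‖ ≤ ω*‖u − v‖ for all u,v ∈ D. Then for any ρ* ≤ 2/(3ω*) with B(u*, ρ*) ⊆ D, the Newton sequence started at any u₀ ∈ B(u*, ρ*) is well-defined, remains in B(u*, ρ*), and converges to u*. Moreover u* is the unique root of F in D ∩ B(u*, 1/ω*). -/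
/-!
Composing with `A = F'(u*)⁻¹` replaces `F` by `G = A ∘ F`, whose derivative is `1` at `u*` and
`ω*`-Lipschitz, and leaves the Newton iteration unchanged. The Lipschitz bound gives the Taylor
estimate `‖G u - G v - G'(v)(u - v)‖ ≤ ω*/2 ‖u - v‖²`, and the Neumann series gives
`‖G'(w)⁻¹‖ ≤ (1 - ω*‖w - u*‖)⁻¹`. Hence one Newton step from `w` lands within
`ω*‖w - u*‖² / (2 (1 - ω*‖w - u*‖))` of `u*`; on the ball of radius `r = ‖u₀ - u*‖` this is a
contraction by `q = ω* r / (2 (1 - ω* r))`, and `q < 1` exactly because `ω* r < 2/3`.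
For a second root `v`, the Taylor estimate at `u*` reads `‖v - u*‖ ≤ ω*/2 ‖v - u*‖²`, which forces
`v = u*` once `ω*‖v - u*‖ < 1`.
-/

open Filter Topology Metric

section Taylor

variable {E G : Type*} [NormedAddCommGroup E] [NormedSpace ℝ E]
  [NormedAddCommGroup G] [NormedSpace ℝ G]

theorem norm_sub_sub_fderiv_le_of_norm_fderiv_sub_le {f : E → G} {f' : E → E →L[ℝ] G}
    {a b : E} {L : ℝ} (hf : ∀ x ∈ segment ℝ a b, HasFDerivAt f (f' x) x)
    (hL : ∀ x ∈ segment ℝ a b, ‖f' x - f' a‖ ≤ L * ‖x - a‖) :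
    ‖f b - f a - f' a (b - a)‖ ≤ L / 2 * ‖b - a‖ ^ 2 := by
  set d := b - a
  let γ : ℝ → E := fun t => a + t • d
  have hγ : ∀ t ∈ Set.Icc (0 : ℝ) 1, γ t ∈ segment ℝ a b := fun t ht => by
    rw [segment_eq_image']; exact ⟨t, ht, rfl⟩
  let φ : ℝ → G := fun t => f (γ t) - f a - t • f' a d
  have hφ : ∀ t ∈ Set.Icc (0 : ℝ) 1, HasDerivAt φ ((f' (γ t) - f' a) d) t := by
    intro t ht
    have hγ' : HasDerivAt γ d t := by
      have := ((hasDerivAt_id' t).smul_const d).const_add a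
      rwa [one_smul] at this
    have := (((hf _ (hγ t ht)).comp_hasDerivAt t hγ').sub_const (f a)).sub
      ((hasDerivAt_id' t).smul_const (f' a d))
    rwa [one_smul, ← sub_apply] at this
  have hbound : ∀ t ∈ Set.Ico (0 : ℝ) 1, ‖(f' (γ t) - f' a) d‖ ≤ L * ‖d‖ ^ 2 * t := by
    intro t ht
    calc ‖(f' (γ t) - f' a) d‖ ≤ ‖f' (γ t) - f' a‖ * ‖d‖ := ContinuousLinearMap.le_opNorm _ _
      _ ≤ L * ‖γ t - a‖ * ‖d‖ := by gcongr; exact hL _ (hγ t (Set.Ico_subset_Icc_self ht))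
      _ = L * ‖d‖ ^ 2 * t := by
        have : ‖γ t - a‖ = t * ‖d‖ := by
          rw [show γ t - a = t • d from add_sub_cancel_left a _, norm_smul, Real.norm_of_nonneg ht.1]
        rw [this]; ring
  have hB : ∀ t, HasDerivAt (fun t => L / 2 * ‖d‖ ^ 2 * t ^ 2) (L * ‖d‖ ^ 2 * t) t := by
    intro t
    exact ((hasDerivAt_pow 2 t).const_mul (L / 2 * ‖d‖ ^ 2)).congr_deriv (by norm_num; ring)
  have := image_norm_le_of_norm_deriv_right_le_deriv_boundary
    (fun t ht => (hφ t ht).continuousAt.continuousWithinAt)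
    (fun t ht => (hφ t (Set.Ico_subset_Icc_self ht)).hasDerivWithinAt)
    (by simp [φ, γ]) hB hbound (Set.right_mem_Icc.2 zero_le_one)
  simpa [φ, γ, d] using this

end Taylor

section Neumann

variable {R : Type*} [NormedRing R] [HasSummableGeomSeries R] {x : R}

theorem isUnit_of_norm_one_sub_lt_one (h : ‖1 - x‖ < 1) : IsUnit x :=
  sub_sub_cancel 1 x ▸ isUnit_one_sub_of_norm_lt_one h

theorem norm_ringInverse_le_of_norm_one_sub_lt_one (h1 : ‖(1 : R)‖ ≤ 1) (h : ‖1 - x‖ < 1) :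
    ‖Ring.inverse x‖ ≤ (1 - ‖1 - x‖)⁻¹ := by
  have := tsum_geometric_le_of_norm_lt_one (1 - x) h
  rw [geom_series_eq_inverse _ h, sub_sub_cancel] at this
  linarith

end Neumann

theorem dist_iterate_le_pow_mul {X : Type*} [PseudoMetricSpace X] {N : X → X} {c x : X}
    {r q : ℝ} (hq0 : 0 ≤ q) (hq1 : q ≤ 1)
    (hN : ∀ w, dist w c ≤ r → dist (N w) c ≤ q * dist w c) (hx : dist x c ≤ r) (k : ℕ) :
    dist (N^[k] x) c ≤ q ^ k * dist x c := by
  induction k with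
  | zero => simp
  | succ k ih =>
    have hk : dist (N^[k] x) c ≤ r :=
      ih.trans ((mul_le_of_le_one_left dist_nonneg (pow_le_one₀ hq0 hq1)).trans hx)
    rw [Function.iterate_succ_apply', pow_succ', mul_assoc]
    exact (hN _ hk).trans (mul_le_mul_of_nonneg_left ih hq0)

theorem newton_ratio_le {ω r s : ℝ} (hω : 0 ≤ ω) (hs : 0 ≤ s) (hsr : s ≤ r) (hr : ω * r < 1) :
    (1 - ω * s)⁻¹ * (ω / 2 * s ^ 2) ≤ ω * r / (2 * (1 - ω * r)) * s := by
  set q := ω * r / (2 * (1 - ω * r)) with hq_def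
  have hq0 : 0 ≤ q := div_nonneg (mul_nonneg hω (hs.trans hsr)) (by linarith)
  have hq : (1 - ω * r) * q = ω * r / 2 := by
    rw [hq_def]; field_simp [(by linarith : 1 - ω * r ≠ 0)]
  have hωs : ω * s ≤ ω * r := mul_le_mul_of_nonneg_left hsr hω
  have hωsq : ω * s / 2 ≤ (1 - ω * s) * q := by nlinarith [mul_nonneg (sub_nonneg.2 hωs) hq0]
  rw [inv_mul_le_iff₀ (by linarith)]
  calc ω / 2 * s ^ 2 = ω * s / 2 * s := by ring
    _ ≤ (1 - ω * s) * q * s := by gcongr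
    _ = (1 - ω * s) * (q * s) := by ring

section Normalized

variable {E : Type*} [NormedAddCommGroup E] [NormedSpace ℝ E]

/-- `Ring.inverse` is `0` where `G' v` is not invertible, so the value there is junk. -/
noncomputable def newtonMap (G : E → E) (G' : E → E →L[ℝ] E) (v : E) : E :=
  v - Ring.inverse (G' v) (G v)

variable {G : E → E} {G' : E → E →L[ℝ] E} {c : E} {ω : ℝ}

theorem eq_of_apply_eq_zero_of_norm_fderiv_sub_le {v : E} (hG : ∀ x ∈ segment ℝ c v, HasFDerivAt G (G' x) x)
    (hLip : ∀ x ∈ segment ℝ c v, ‖G' x - G' c‖ ≤ ω * ‖x - c‖) (hGc : G c = 0)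
    (hG'c : G' c = 1) (hv : ω * ‖v - c‖ < 1) (hGv : G v = 0) : v = c := by
  have h := norm_sub_sub_fderiv_le_of_norm_fderiv_sub_le hG hLip
  rw [hGv, hGc, hG'c, sub_zero, zero_sub, one_apply_eq_self, norm_neg] at h
  have : ‖v - c‖ = 0 := by nlinarith [norm_nonneg (v - c)]
  exact sub_eq_zero.1 (norm_eq_zero.1 this)

variable [CompleteSpace E]

theorem norm_newtonMap_sub_le {w : E} (hG : ∀ x ∈ segment ℝ w c, HasFDerivAt G (G' x) x)
    (hLip : ∀ x ∈ segment ℝ w c, ‖G' x - G' w‖ ≤ ω * ‖x - w‖) (hGc : G c = 0)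
    (hG'c : G' c = 1) (hw : ω * ‖w - c‖ < 1) :
    ‖newtonMap G G' w - c‖ ≤ (1 - ω * ‖w - c‖)⁻¹ * (ω / 2 * ‖w - c‖ ^ 2) := by
  set M := G' w
  have hLc : ‖1 - M‖ ≤ ω * ‖w - c‖ := by
    simpa [hG'c, norm_sub_rev c w] using hLip c (right_mem_segment ℝ w c)
  have hM : ‖1 - M‖ < 1 := hLc.trans_lt hw
  have hinv : ‖Ring.inverse M‖ ≤ (1 - ω * ‖w - c‖)⁻¹ :=
    (norm_ringInverse_le_of_norm_one_sub_lt_one ContinuousLinearMap.norm_id_le hM).trans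
      (inv_anti₀ (by linarith) (by linarith))
  have hMinvM : ∀ x, Ring.inverse M (M x) = x := fun x => by
    simpa using congrArg (fun T : E →L[ℝ] E => T x)
      (Ring.inverse_mul_cancel M (isUnit_of_norm_one_sub_lt_one hM))
  -- the Newton error is `M⁻¹` applied to the Taylor remainder of `G` at `w`, evaluated at `c`
  have herr : newtonMap G G' w - c = Ring.inverse M (G c - G w - M (c - w)) := by
    rw [hGc, map_sub, map_sub, hMinvM, map_zero, zero_sub, newtonMap]
    abel
  have htaylor := norm_sub_sub_fderiv_le_of_norm_fderiv_sub_le hG hLip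
  rw [norm_sub_rev c w] at htaylor
  rw [herr]
  exact (ContinuousLinearMap.le_opNorm _ _).trans
    (mul_le_mul hinv htaylor (norm_nonneg _) (inv_nonneg.2 (by linarith)))

theorem newtonMap_iterate_mem_ball_and_tendsto {ρ : ℝ}
    (hG : ∀ x ∈ ball c ρ, HasFDerivAt G (G' x) x)
    (hLip : ∀ x ∈ ball c ρ, ∀ y ∈ ball c ρ, ‖G' x - G' y‖ ≤ ω * ‖x - y‖) (hGc : G c = 0)
    (hG'c : G' c = 1) (hω : 0 < ω) (hρ : ω * ρ ≤ 2 / 3) {u₀ : E} (hu₀ : u₀ ∈ ball c ρ) :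
    (∀ k, (newtonMap G G')^[k] u₀ ∈ ball c ρ) ∧
      Tendsto (fun k => (newtonMap G G')^[k] u₀) atTop (𝓝 c) := by
  set r := dist u₀ c
  have hr : r < ρ := hu₀
  have hωr : ω * r < 2 / 3 := (mul_lt_mul_of_pos_left hr hω).trans_le hρ
  set q := ω * r / (2 * (1 - ω * r))
  have hq0 : 0 ≤ q := div_nonneg (mul_nonneg hω.le dist_nonneg) (by linarith)
  have hq1 : q < 1 := by rw [div_lt_one (by linarith)]; linarith
  have hcontr : ∀ w, dist w c ≤ r → dist (newtonMap G G' w) c ≤ q * dist w c := by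
    intro w hw
    have hwball : w ∈ ball c ρ := hw.trans_lt hr
    have hseg : segment ℝ w c ⊆ ball c ρ :=
      (convex_ball c ρ).segment_subset hwball (mem_ball_self (dist_nonneg.trans_lt hr))
    simp only [dist_eq_norm] at hw ⊢
    refine (norm_newtonMap_sub_le (fun x hx => hG x (hseg hx))
      (fun x hx => hLip x (hseg hx) w hwball) hGc hG'c ?_).trans
      (newton_ratio_le hω.le (norm_nonneg _) hw (by linarith))
    nlinarith [mul_le_mul_of_nonneg_left hw hω.le]
  have hiter := dist_iterate_le_pow_mul hq0 hq1.le hcontr le_rfl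
  refine ⟨fun k => ?_, ?_⟩
  · exact ((hiter k).trans (mul_le_of_le_one_left dist_nonneg (pow_le_one₀ hq0 hq1.le))).trans_lt hr
  · rw [tendsto_iff_dist_tendsto_zero]
    refine squeeze_zero (fun _ => dist_nonneg) hiter ?_
    simpa using (tendsto_pow_atTop_nhds_zero_of_lt_one hq0 hq1).mul_const r

end Normalized

theorem isNewtonSeq_of_newtonMap_comp {U Y : Type*} [NormedAddCommGroup U] [NormedSpace ℝ U]
    [NormedAddCommGroup Y] [NormedSpace ℝ Y] {F : U → Y} {F' : U → U →L[ℝ] Y}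
    {A : Y →L[ℝ] U} {T : U →L[ℝ] Y} (hTA : ∀ y, T (A y) = y) {u : ℕ → U}
    (hu : ∀ k, u (k + 1) = newtonMap (fun v => A (F v)) (fun v => A.comp (F' v)) (u k))
    (hunit : ∀ k, IsUnit (A.comp (F' (u k)))) : IsNewtonSeq F F' u := by
  intro k
  set M := A.comp (F' (u k))
  have hMMinv : ∀ x, M (Ring.inverse M x) = x := fun x => by
    simpa using congrArg (fun S : U →L[ℝ] U => S x) (Ring.mul_inverse_cancel M (hunit k))
  have hMinvM : ∀ x, Ring.inverse M (M x) = x := fun x => by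
    simpa using congrArg (fun S : U →L[ℝ] U => S x) (Ring.inverse_mul_cancel M (hunit k))
  -- `T ∘ A = id` turns `M = A ∘ F'(u k)` back into `F'(u k) = T ∘ M`
  refine ⟨(Ring.inverse M).comp A, fun y => ?_, hMinvM, hu k⟩
  calc F' (u k) (Ring.inverse M (A y)) = T (M (Ring.inverse M (A y))) := (hTA _).symm
    _ = y := by rw [hMMinv, hTA]

theorem rall_rheinboldt_general
    {U Y : Type*} [NormedAddCommGroup U] [NormedSpace ℝ U] [CompleteSpace U]
    [NormedAddCommGroup Y] [NormedSpace ℝ Y]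
    (D : Set U) (hDconv : Convex ℝ D)
    (F : U → Y) (F' : U → (U →L[ℝ] Y))
    (hdiff : ∀ u ∈ D, HasFDerivAt F (F' u) u)
    (uStar : U) (huStar : uStar ∈ D) (hroot : F uStar = 0)
    (A : Y →L[ℝ] U) (hAl : ∀ y, F' uStar (A y) = y) (hAr : ∀ x, A (F' uStar x) = x)
    (ωStar : ℝ) (hω : 0 < ωStar)
    (hLip : ∀ u ∈ D, ∀ v ∈ D, ‖A.comp (F' u - F' v)‖ ≤ ωStar * ‖u - v‖)
    (ρStar : ℝ) (hρ : ρStar ≤ 2 / (3 * ωStar))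
    (hball : ball uStar ρStar ⊆ D) :
    (∀ u₀ ∈ ball uStar ρStar,
      ∃ u : ℕ → U, u 0 = u₀ ∧ IsNewtonSeq F F' u ∧
        (∀ k, u k ∈ ball uStar ρStar) ∧ Tendsto u atTop (𝓝 uStar)) ∧
    (∀ v ∈ D ∩ ball uStar (1 / ωStar), F v = 0 → v = uStar) := by
  set G : U → U := fun v => A (F v)
  set G' : U → U →L[ℝ] U := fun v => A.comp (F' v)
  have hG : ∀ v ∈ D, HasFDerivAt G (G' v) v := fun v hv => A.hasFDerivAt.comp v (hdiff v hv)
  have hGLip : ∀ u ∈ D, ∀ v ∈ D, ‖G' u - G' v‖ ≤ ωStar * ‖u - v‖ := by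
    simpa only [G', ← ContinuousLinearMap.comp_sub] using hLip
  have hGc : G uStar = 0 := by simp [G, hroot]
  have hG'c : G' uStar = 1 := ContinuousLinearMap.ext hAr
  have hωρ : ωStar * ρStar ≤ 2 / 3 := by
    rw [le_div_iff₀ (by positivity)] at hρ; linarith
  refine ⟨fun u₀ hu₀ => ?_, fun v ⟨hvD, hv⟩ hFv => ?_⟩
  · obtain ⟨hmem, hlim⟩ := newtonMap_iterate_mem_ball_and_tendsto
      (fun x hx => hG x (hball hx)) (fun x hx y hy => hGLip x (hball hx) y (hball hy))
      hGc hG'c hω hωρ hu₀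
    have hunit : ∀ w ∈ ball uStar ρStar, IsUnit (G' w) := fun w hw => by
      have hLw := hG'c ▸ hGLip uStar huStar w (hball hw)
      rw [norm_sub_rev uStar w] at hLw
      refine isUnit_of_norm_one_sub_lt_one (hLw.trans_lt ?_)
      nlinarith [mem_ball_iff_norm.1 hw]
    exact ⟨_, rfl, isNewtonSeq_of_newtonMap_comp hAl (fun k => Function.iterate_succ_apply' _ _ _)
      (fun k => hunit _ (hmem k)), hmem, hlim⟩
  · have hseg := hDconv.segment_subset huStar hvD
    refine eq_of_apply_eq_zero_of_norm_fderiv_sub_le (fun x hx => hG x (hseg hx))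
      (fun x hx => hGLip x (hseg hx) uStar huStar) hGc hG'c ?_ (by simp [G, hFv])
    rwa [mem_ball_iff_norm, lt_div_iff₀ hω, mul_comm] at hv

/-- Affine-covariant Rall–Rheinboldt theorem. -/
theorem rall_rheinboldt
    {U Y : Type*} [NormedAddCommGroup U] [NormedSpace ℝ U] [CompleteSpace U]
    [NormedAddCommGroup Y] [NormedSpace ℝ Y] [CompleteSpace Y]
    (D : Set U) (hDopen : IsOpen D) (hDconv : Convex ℝ D)
    (F : U → Y) (F' : U → (U →L[ℝ] Y))
    (hdiff : ∀ u ∈ D, HasFDerivAt F (F' u) u) (hcont : ContinuousOn F' D)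
    (uStar : U) (huStar : uStar ∈ D) (hroot : F uStar = 0)
    (A : Y →L[ℝ] U) (hAl : ∀ y, F' uStar (A y) = y) (hAr : ∀ x, A (F' uStar x) = x)
    (ωStar : ℝ) (hω : 0 < ωStar)
    (hLip : ∀ u ∈ D, ∀ v ∈ D, ‖A.comp (F' u - F' v)‖ ≤ ωStar * ‖u - v‖)
    (ρStar : ℝ) (hρpos : 0 < ρStar) (hρ : ρStar ≤ 2 / (3 * ωStar))
    (hball : ball uStar ρStar ⊆ D) :
    (∀ u₀ ∈ ball uStar ρStar,
      ∃ u : ℕ → U, u 0 = u₀ ∧ IsNewtonSeq F F' u ∧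
        (∀ k, u k ∈ ball uStar ρStar) ∧ Tendsto u atTop (𝓝 uStar)) ∧
    (∀ v ∈ D ∩ ball uStar (1 / ωStar), F v = 0 → v = uStar) :=
  rall_rheinboldt_general D hDconv F F' hdiff uStar huStar hroot A hAl hAr ωStar hω hLip ρStar hρ
    hball
end

section
/- Under the Rall–Rheinboldt hypotheses at a root u* with affine-covariant Lipschitz constant ω*, if the Newton sequence (u_k) starting in B(u*, ρ*) with ρ* ≤ 2/(3ω*) is well-defined, then the Newton error contracts: ‖u_{k+1} − u*‖ ≤ (ω*/2)·‖u_k − u*‖² / (1 − ω*‖u_k − u*‖), and hence convergence is quadratic. -/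
/-!
Since `F u* = 0` and `F'(u)⁻¹ F'(u) = 1`, the Newton error is `u₊ - u* = F'(u)⁻¹ r` with the
Taylor remainder `r = F u* - F u - F'(u) (u* - u)`, and `r = F'(u*) (A r)`. The affine-covariant
Lipschitz bound along the segment from `u` to `u*` gives `‖A r‖ ≤ ω/2 ‖u - u*‖²`. Finally
`F'(u)⁻¹ F'(u*)` is a left inverse of `1 + A (F'(u) - F'(u*))`, a perturbation of the identity
of norm at most `ω ‖u - u*‖ < 1`, so `‖F'(u)⁻¹ F'(u*)‖ ≤ 1 / (1 - ω ‖u - u*‖)`.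
-/

open Metric Set

theorem norm_comp_image_sub_sub_fderiv_le
    {E F G : Type*} [NormedAddCommGroup E] [NormedSpace ℝ E]
    [NormedAddCommGroup F] [NormedSpace ℝ F] [NormedAddCommGroup G] [NormedSpace ℝ G]
    {f : E → F} {f' : E → E →L[ℝ] F} (T : F →L[ℝ] G) {x y : E} {ω : ℝ}
    (hf : ∀ z ∈ segment ℝ x y, HasFDerivAt f (f' z) z)
    (hlip : ∀ z ∈ segment ℝ x y, ‖T.comp (f' z - f' x)‖ ≤ ω * ‖z - x‖) :
    ‖T (f y - f x - f' x (y - x))‖ ≤ ω / 2 * ‖y - x‖ ^ 2 := by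
  set d := y - x
  let p : ℝ → E := fun s => x + s • d
  have hp : ∀ s ∈ Icc (0 : ℝ) 1, p s ∈ segment ℝ x y := fun s hs => by
    simpa [p, d, AffineMap.lineMap_apply_module', add_comm] using
      lineMap_mem_segment (𝕜 := ℝ) x y hs
  let g : ℝ → G := fun s => T (f (p s) - f x - s • f' x d)
  have hg : ∀ s ∈ Icc (0 : ℝ) 1, HasDerivAt g (T ((f' (p s) - f' x) d)) s := by
    intro s hs
    have hps : HasDerivAt p d s := by
      simpa only [one_smul] using ((hasDerivAt_id' s).smul_const d).const_add x
    have := (((hf _ (hp s hs)).comp_hasDerivAt s hps).sub_const (f x)).sub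
      ((hasDerivAt_id s).smul_const (f' x d))
    have hTg : HasDerivAt g (T (f' (p s) d - (1 : ℝ) • f' x d)) s :=
      T.hasFDerivAt.comp_hasDerivAt s this
    simpa using hTg
  have hbound : ∀ s ∈ Ico (0 : ℝ) 1, ‖T ((f' (p s) - f' x) d)‖ ≤ ω * s * ‖d‖ ^ 2 := by
    intro s hs
    have hpx : ‖p s - x‖ = s * ‖d‖ := by simp [p, norm_smul, abs_of_nonneg hs.1]
    calc ‖T ((f' (p s) - f' x) d)‖ ≤ ‖T.comp (f' (p s) - f' x)‖ * ‖d‖ :=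
          (T.comp (f' (p s) - f' x)).le_opNorm d
      _ ≤ ω * (s * ‖d‖) * ‖d‖ := by
          rw [← hpx]; gcongr; exact hlip _ (hp s (Ico_subset_Icc_self hs))
      _ = ω * s * ‖d‖ ^ 2 := by ring
  have hB : ∀ s, HasDerivAt (fun s => ω / 2 * s ^ 2 * ‖d‖ ^ 2) (ω * s * ‖d‖ ^ 2) s := fun s =>
    (((hasDerivAt_pow 2 s).const_mul (ω / 2)).mul_const (‖d‖ ^ 2)).congr_deriv (by ring)
  have hfence := image_norm_le_of_norm_deriv_right_le_deriv_boundary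
    (fun s hs => (hg s hs).continuousAt.continuousWithinAt)
    (fun s hs => (hg s (Ico_subset_Icc_self hs)).hasDerivWithinAt) (by simp [g, p]) hB
    hbound (right_mem_Icc.2 zero_le_one)
  simpa [g, p, d] using hfence

theorem ContinuousLinearMap.opNorm_le_of_mul_one_add_eq_one
    {𝕜 E : Type*} [NontriviallyNormedField 𝕜] [NormedAddCommGroup E] [NormedSpace 𝕜 E]
    {B C : E →L[𝕜] E} {c : ℝ} (h : B * (1 + C) = 1) (hC : ‖C‖ ≤ c) (hc : c < 1) :
    ‖B‖ ≤ (1 - c)⁻¹ := by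
  have hB : B = 1 - B * C := by rw [eq_sub_iff_add_eq, ← h, mul_add, mul_one]
  have : ‖B‖ ≤ 1 + ‖B‖ * c :=
    calc ‖B‖ = ‖1 - B * C‖ := by rw [← hB]
      _ ≤ ‖(1 : E →L[𝕜] E)‖ + ‖B‖ * ‖C‖ :=
          (norm_sub_le _ _).trans (by gcongr; exact opNorm_comp_le _ _)
      _ ≤ 1 + ‖B‖ * c := by gcongr; exact norm_id_le
  rw [← one_div, le_div_iff₀ (sub_pos.2 hc)]
  linarith

theorem newton_error_contraction_general
    {U Y : Type*} [NormedAddCommGroup U] [NormedSpace ℝ U]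
    [NormedAddCommGroup Y] [NormedSpace ℝ Y]
    (D : Set U) (hDconv : Convex ℝ D)
    (F : U → Y) (F' : U → (U →L[ℝ] Y))
    (hdiff : ∀ u ∈ D, HasFDerivAt F (F' u) u)
    (uStar : U) (huStar : uStar ∈ D) (hroot : F uStar = 0)
    (A : Y →L[ℝ] U) (hAl : ∀ y, F' uStar (A y) = y)
    (ωStar : ℝ) (hω : 0 < ωStar)
    (hLip : ∀ u ∈ D, ∀ v ∈ D, ‖A.comp (F' u - F' v)‖ ≤ ωStar * ‖u - v‖)
    (ρStar : ℝ) (hρ : ρStar ≤ 2 / (3 * ωStar))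
    (hball : ball uStar ρStar ⊆ D)
    (u : U) (hu : u ∈ ball uStar ρStar)
    (Au : Y →L[ℝ] U) (hAur : ∀ x, Au (F' u x) = x)
    (unext : U) (hstep : unext = u - Au (F u)) :
    ‖unext - uStar‖ ≤ (ωStar / 2) * ‖u - uStar‖ ^ 2 / (1 - ωStar * ‖u - uStar‖) := by
  have huD : u ∈ D := hball hu
  have hωt : ωStar * ‖u - uStar‖ < 1 :=
    calc ωStar * ‖u - uStar‖ < ωStar * ρStar := by gcongr; exact mem_ball_iff_norm.1 hu
      _ ≤ ωStar * (2 / (3 * ωStar)) := by gcongr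
      _ = 2 / 3 := by field_simp
      _ < 1 := by norm_num
  have hseg : segment ℝ u uStar ⊆ D := hDconv.segment_subset huD huStar
  have hremainder : ‖A (F uStar - F u - F' u (uStar - u))‖ ≤ ωStar / 2 * ‖u - uStar‖ ^ 2 := by
    simpa only [norm_sub_rev uStar u] using norm_comp_image_sub_sub_fderiv_le A
      (fun z hz => hdiff z (hseg hz)) (fun z hz => hLip z (hseg hz) u huD)
  have hperturbed : ‖Au.comp (F' uStar)‖ ≤ (1 - ωStar * ‖u - uStar‖)⁻¹ := by
    refine ContinuousLinearMap.opNorm_le_of_mul_one_add_eq_one ?_ (hLip u huD uStar huStar) hωt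
    ext x
    simp [hAl, hAur]
  have herror : unext - uStar = Au.comp (F' uStar) (A (F uStar - F u - F' u (uStar - u))) := by
    simp only [ContinuousLinearMap.comp_apply, hAl, hroot, hstep, map_sub, map_zero, hAur]
    abel
  calc ‖unext - uStar‖
      ≤ (1 - ωStar * ‖u - uStar‖)⁻¹ * (ωStar / 2 * ‖u - uStar‖ ^ 2) := by
        rw [herror]
        exact (ContinuousLinearMap.le_opNorm _ _).trans
          (mul_le_mul hperturbed hremainder (norm_nonneg _) (inv_pos.2 (sub_pos.2 hωt)).le)
    _ = ωStar / 2 * ‖u - uStar‖ ^ 2 / (1 - ωStar * ‖u - uStar‖) := by ring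

/-- Quadratic contraction of the Newton error under the Rall–Rheinboldt
hypotheses: one Newton step from `u ∈ B(u*, ρ*)`, `ρ* ≤ 2/(3ω*)`, satisfies
`‖u₊ - u*‖ ≤ (ω*/2)‖u - u*‖² / (1 - ω*‖u - u*‖)`. -/
theorem newton_error_contraction
    {U Y : Type*} [NormedAddCommGroup U] [NormedSpace ℝ U] [CompleteSpace U]
    [NormedAddCommGroup Y] [NormedSpace ℝ Y] [CompleteSpace Y]
    (D : Set U) (hDopen : IsOpen D) (hDconv : Convex ℝ D)
    (F : U → Y) (F' : U → (U →L[ℝ] Y))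
    (hdiff : ∀ u ∈ D, HasFDerivAt F (F' u) u) (hcont : ContinuousOn F' D)
    (uStar : U) (huStar : uStar ∈ D) (hroot : F uStar = 0)
    (A : Y →L[ℝ] U) (hAl : ∀ y, F' uStar (A y) = y) (hAr : ∀ x, A (F' uStar x) = x)
    (ωStar : ℝ) (hω : 0 < ωStar)
    (hLip : ∀ u ∈ D, ∀ v ∈ D, ‖A.comp (F' u - F' v)‖ ≤ ωStar * ‖u - v‖)
    (ρStar : ℝ) (hρpos : 0 < ρStar) (hρ : ρStar ≤ 2 / (3 * ωStar))
    (hball : ball uStar ρStar ⊆ D)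
    (u : U) (hu : u ∈ ball uStar ρStar)
    (Au : Y →L[ℝ] U) (hAul : ∀ y, F' u (Au y) = y) (hAur : ∀ x, Au (F' u x) = x)
    (unext : U) (hstep : unext = u - Au (F u)) :
    ‖unext - uStar‖ ≤ (ωStar / 2) * ‖u - uStar‖ ^ 2 / (1 - ωStar * ‖u - uStar‖) :=
  newton_error_contraction_general D hDconv F F' hdiff uStar huStar hroot A hAl ωStar hω hLip ρStar
    hρ hball u hu Au hAur unext hstep
end
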